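/- arXiv:2210.08075 — 2 statements merged into one kernel-verified Lean document; each statement's English description precedes it below -/
import Mathlib

section
/- Let c = (1/8)·(2π·coth(2π) + 1), let M, N ≥ 1 be integers, β̂ ≥ 0 a real and F ∈ ℝ^{M×(N+1)}. Then for every B ∈ ℝ^{M×(N+1)} the Euclidean inner product satisfies 𝒫(B)·B ≤ −|B|² + β̂·(2c/π²)·|B|² + |F|·|B|, where |·| denotes the Euclidean norm. In particular, if β̂ < π²/(2c), then 𝒫(B)·B < 0 whenever |B| > |F|/(1 − 2cβ̂/π²). -/
open Real
open Finset

/-- The real hyperbolic cotangent, `coth x = cosh x / sinh x`. -/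
noncomputable def cothR (x : ℝ) : ℝ := Real.cosh x / Real.sinh x

/-- The constant `c = (1/8)·(2π·coth(2π) + 1)`. -/
noncomputable def cConst : ℝ := (1/8) * (2 * π * cothR (2 * π) + 1)

/-- `b_n = 1/2` if `n = 0`, `b_n = 1/4` otherwise. -/
noncomputable def bCoef (n : ℕ) : ℝ := if n = 0 then 1/2 else 1/4

/-- `α_{mn} = 4π²m² + π²n²`. -/
noncomputable def alphaMN (m n : ℕ) : ℝ := 4 * π ^ 2 * (m : ℝ) ^ 2 + π ^ 2 * (n : ℝ) ^ 2

/-- `γ_{mn} = √(α_{mn}·b_n)`. -/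
noncomputable def gammaMN (m n : ℕ) : ℝ := Real.sqrt (alphaMN m n * bCoef n)

/-- The map `𝒫 : ℝ^{M×(N+1)} → ℝ^{M×(N+1)}`, where the row index `l` ranges over `{1,…,M}`
(represented by `l : Fin M` standing for `l+1`) and the column index `r` over `{0,…,N}`. -/
noncomputable def Pop (M N : ℕ) (β : ℝ) (F : Fin M → Fin (N + 1) → ℝ)
    (B : Fin M → Fin (N + 1) → ℝ) : Fin M → Fin (N + 1) → ℝ :=
  fun l r =>
    -B l r
      + β * (∑ n : Fin (N + 1),
          if Odd ((n : ℕ) + (r : ℕ)) then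
            B l n * ((n : ℕ) / 2 : ℝ)
              * (1 / (gammaMN ((l : ℕ) + 1) (n : ℕ) * gammaMN ((l : ℕ) + 1) (r : ℕ)))
              * (1 / (((n : ℕ) : ℝ) + ((r : ℕ) : ℝ)) + 1 / (((n : ℕ) : ℝ) - ((r : ℕ) : ℝ)))
          else 0)
      - F l r

/-- The Euclidean inner product on `ℝ^{M×(N+1)}`. -/
noncomputable def edot (M N : ℕ) (A B : Fin M → Fin (N + 1) → ℝ) : ℝ :=
  ∑ l : Fin M, ∑ r : Fin (N + 1), A l r * B l r

/-- The Euclidean norm on `ℝ^{M×(N+1)}`. -/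
noncomputable def enorm (M N : ℕ) (B : Fin M → Fin (N + 1) → ℝ) : ℝ :=
  Real.sqrt (∑ l : Fin M, ∑ r : Fin (N + 1), (B l r) ^ 2)

noncomputable def qfun : ℕ → ℝ := fun n => if n = 0 then 1/8 else 1/((n:ℝ)^2+4)

lemma qfun_nonneg (n : ℕ) : 0 ≤ qfun n := by
  unfold qfun; split <;> positivity

lemma qtail (K : ℕ) : ∑ n ∈ Finset.range K, (1:ℝ)/(((n:ℝ)+3)^2+4) ≤ 2/5 - 1/((K:ℝ)+5/2) := by
  induction K with
  | zero => norm_num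
  | succ k ih =>
    rw [Finset.sum_range_succ]
    have hk : (0:ℝ) ≤ (k:ℝ) := Nat.cast_nonneg k
    have key : (1:ℝ)/(((k:ℝ)+3)^2+4) ≤ 1/((k:ℝ)+5/2) - 1/((k:ℝ)+7/2) := by
      have h1 : (0:ℝ) < (k:ℝ)+5/2 := by linarith
      have h2 : (0:ℝ) < (k:ℝ)+7/2 := by linarith
      have h3 : 1/((k:ℝ)+5/2) - 1/((k:ℝ)+7/2) = 1/(((k:ℝ)+5/2)*((k:ℝ)+7/2)) := by
        field_simp; ring
      rw [h3]
      apply one_div_le_one_div_of_le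
      · positivity
      · nlinarith
    push_cast
    rw [show ((k:ℝ)+1+5/2) = (k:ℝ)+7/2 by ring]
    linarith

lemma qsum (K : ℕ) : ∑ n ∈ Finset.range K, qfun n ≤ 17/20 := by
  have h3 : ∑ n ∈ Finset.range 3, qfun n = 9/20 := by
    simp [Finset.sum_range_succ, qfun]
    norm_num
  rcases le_or_gt K 3 with h | h
  · calc ∑ n ∈ Finset.range K, qfun n
        ≤ ∑ n ∈ Finset.range 3, qfun n :=
          Finset.sum_le_sum_of_subset_of_nonneg (Finset.range_subset_range.2 h)
            (fun i _ _ => qfun_nonneg i)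
      _ ≤ 17/20 := by rw [h3]; norm_num
  · obtain ⟨K', rfl⟩ : ∃ K', K = 3 + K' := ⟨K - 3, by omega⟩
    rw [Finset.sum_range_add, h3]
    have : ∑ x ∈ Finset.range K', qfun (3 + x) ≤ 2/5 := by
      have heq : ∀ x ∈ Finset.range K', qfun (3 + x) = 1/(((x:ℝ)+3)^2+4) := by
        intro x _
        unfold qfun
        rw [if_neg (by omega)]
        push_cast; ring_nf
      rw [Finset.sum_congr rfl heq]
      have := qtail K'
      have hK : (0:ℝ) < (K':ℝ)+5/2 := by positivity
      have : (0:ℝ) ≤ 1/((K':ℝ)+5/2) := by positivity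
      linarith [qtail K']
    linarith

lemma one_le_cothR_two_pi : 1 ≤ cothR (2*π) := by
  have hπ := Real.pi_pos
  have hs : 0 < Real.sinh (2*π) := Real.sinh_pos_iff.2 (by positivity)
  rw [cothR, le_div_iff₀ hs, one_mul]
  have := Real.exp_pos (-(2*π))
  rw [Real.sinh_eq, Real.cosh_eq]
  linarith

lemma cConst_ge : 17/20 ≤ cConst := by
  have hπ := Real.pi_gt_three
  have h := one_le_cothR_two_pi
  have hπ0 := Real.pi_pos
  unfold cConst
  nlinarith

lemma cConst_pos : 0 < cConst := lt_of_lt_of_le (by norm_num) cConst_ge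

lemma bCoef_pos (n : ℕ) : 0 < bCoef n := by unfold bCoef; split <;> norm_num

lemma alphaMN_pos {l : ℕ} (hl : 1 ≤ l) (n : ℕ) : 0 < alphaMN l n := by
  have hπ := Real.pi_pos
  have hl' : (1:ℝ) ≤ (l:ℝ) := by exact_mod_cast hl
  have hπ2 : (0:ℝ) < π^2 := by positivity
  have h1 : (1:ℝ) ≤ (l:ℝ)^2 := by nlinarith
  unfold alphaMN
  nlinarith [sq_nonneg ((n:ℝ)*π), mul_le_mul_of_nonneg_left h1 hπ2.le]

lemma gammaMN_pos {l : ℕ} (hl : 1 ≤ l) (n : ℕ) : 0 < gammaMN l n :=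
  Real.sqrt_pos.2 (mul_pos (alphaMN_pos hl n) (bCoef_pos n))

lemma gammaMN_sq {l : ℕ} (hl : 1 ≤ l) (n : ℕ) :
    (gammaMN l n)^2 = alphaMN l n * bCoef n :=
  Real.sq_sqrt (le_of_lt (mul_pos (alphaMN_pos hl n) (bCoef_pos n)))

lemma inv_gammaMN_sq_le {l : ℕ} (hl : 1 ≤ l) (n : ℕ) :
    (1/gammaMN l n)^2 ≤ 4/π^2 * qfun n := by
  have hπ := Real.pi_pos
  have hl' : (1:ℝ) ≤ (l:ℝ) := by exact_mod_cast hl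
  have hπ2 : (0:ℝ) < π^2 := by positivity
  have h1 : (1:ℝ) ≤ (l:ℝ)^2 := by nlinarith
  have h2 := mul_le_mul_of_nonneg_left h1 hπ2.le
  rw [div_pow, one_pow, gammaMN_sq hl]
  unfold alphaMN bCoef qfun
  by_cases hn : n = 0
  · subst hn
    rw [if_pos rfl, if_pos rfl]
    push_cast
    rw [show (4*π^2*(l:ℝ)^2 + π^2*(0:ℝ)^2)*(1/2) = 2*π^2*(l:ℝ)^2 by ring,
      show (4:ℝ)/π^2*(1/8) = 1/(2*π^2) by ring]
    apply one_div_le_one_div_of_le (by positivity)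
    nlinarith
  · rw [if_neg hn, if_neg hn]
    have hn' : (1:ℝ) ≤ (n:ℝ) := by exact_mod_cast Nat.one_le_iff_ne_zero.2 hn
    rw [show (4:ℝ)/π^2*(1/((n:ℝ)^2+4)) = 4/(π^2*((n:ℝ)^2+4)) by
        rw [div_mul_div_comm, mul_one],
      div_le_div_iff₀ (by positivity) (by positivity)]
    nlinarith

lemma sum_inv_gammaMN_sq {l : ℕ} (hl : 1 ≤ l) (N : ℕ) :
    ∑ n : Fin (N+1), (1/gammaMN l (n:ℕ))^2 ≤ 4*cConst/π^2 := by
  have hπ := Real.pi_pos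
  calc ∑ n : Fin (N+1), (1/gammaMN l (n:ℕ))^2
      ≤ ∑ n : Fin (N+1), 4/π^2 * qfun (n:ℕ) :=
        Finset.sum_le_sum (fun n _ => inv_gammaMN_sq_le hl (n:ℕ))
    _ = 4/π^2 * ∑ n ∈ Finset.range (N+1), qfun n := by
        rw [← Finset.mul_sum, ← Fin.sum_univ_eq_sum_range]
    _ ≤ 4/π^2 * (17/20) := by
        have h4 : (0:ℝ) ≤ 4/π^2 := by positivity
        exact mul_le_mul_of_nonneg_left (qsum (N+1)) h4
    _ ≤ 4*cConst/π^2 := by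
        rw [show (4:ℝ)/π^2*(17/20) = (17/5)/π^2 by rw [div_mul_eq_mul_div]; norm_num]
        gcongr
        linarith [cConst_ge]

lemma row_bound_gen (N : ℕ) (b : Fin (N+1) → ℝ) (γ : Fin (N+1) → ℝ) (hγ : ∀ n, 0 < γ n) :
    (∑ r : Fin (N+1), (∑ n : Fin (N+1),
        if Odd ((n:ℕ) + (r:ℕ)) then
          b n * (((n:ℕ):ℝ) / 2) * (1 / (γ n * γ r))
            * (1 / (((n:ℕ):ℝ) + ((r:ℕ):ℝ)) + 1 / (((n:ℕ):ℝ) - ((r:ℕ):ℝ)))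
        else 0) * b r)
      ≤ 1/2 * (∑ n : Fin (N+1), (1/γ n)^2) * (∑ r : Fin (N+1), b r ^ 2) := by
  classical
  set A : Fin (N+1) → Fin (N+1) → ℝ := fun n r =>
    (if Odd ((n:ℕ) + (r:ℕ)) then
      b n * (((n:ℕ):ℝ) / 2) * (1 / (γ n * γ r))
        * (1 / (((n:ℕ):ℝ) + ((r:ℕ):ℝ)) + 1 / (((n:ℕ):ℝ) - ((r:ℕ):ℝ)))
    else 0) * b r with hA
  have step0 : (∑ r : Fin (N+1), (∑ n : Fin (N+1),
      if Odd ((n:ℕ) + (r:ℕ)) then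
        b n * (((n:ℕ):ℝ) / 2) * (1 / (γ n * γ r))
          * (1 / (((n:ℕ):ℝ) + ((r:ℕ):ℝ)) + 1 / (((n:ℕ):ℝ) - ((r:ℕ):ℝ)))
      else 0) * b r) = ∑ r : Fin (N+1), ∑ n : Fin (N+1), A n r := by
    refine Finset.sum_congr rfl fun r _ => ?_
    rw [Finset.sum_mul]
  have step_pt : ∀ n r : Fin (N+1),
      A n r + A r n ≤ (|b n|/γ n) * (|b r|/γ r) := by
    intro n r
    by_cases h : Odd ((n:ℕ) + (r:ℕ))
    · have h' : Odd ((r:ℕ) + (n:ℕ)) := by rwa [Nat.add_comm]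
      have hne : (n:ℕ) ≠ (r:ℕ) := by
        intro heq
        rw [heq] at h
        rcases h with ⟨k, hk⟩
        omega
      have hpos : 0 < (n:ℕ) + (r:ℕ) := by rcases h with ⟨k, hk⟩; omega
      have hsum0 : ((n:ℕ):ℝ) + ((r:ℕ):ℝ) ≠ 0 := by
        have : (0:ℝ) < ((n:ℕ):ℝ) + ((r:ℕ):ℝ) := by exact_mod_cast hpos
        exact ne_of_gt this
      have hsum0' : ((r:ℕ):ℝ) + ((n:ℕ):ℝ) ≠ 0 := by rwa [add_comm]
      have hsub0 : ((n:ℕ):ℝ) - ((r:ℕ):ℝ) ≠ 0 := sub_ne_zero.2 (by exact_mod_cast hne)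
      have hsub0' : ((r:ℕ):ℝ) - ((n:ℕ):ℝ) ≠ 0 := sub_ne_zero.2 (by exact_mod_cast hne.symm)
      have hγn : γ n ≠ 0 := (hγ n).ne'
      have hγr : γ r ≠ 0 := (hγ r).ne'
      have key : A n r + A r n = b n * b r * (1/(γ n * γ r)) := by
        simp only [hA, if_pos h, if_pos h']
        field_simp
        ring
      rw [key]
      have hpr : (0:ℝ) < γ n * γ r := mul_pos (hγ n) (hγ r)
      calc b n * b r * (1/(γ n * γ r))
          ≤ |b n| * |b r| * (1/(γ n * γ r)) := by
            apply mul_le_mul_of_nonneg_right _ (one_div_nonneg.2 hpr.le)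
            rw [← abs_mul]
            exact le_abs_self _
        _ = (|b n|/γ n) * (|b r|/γ r) := by
            field_simp
    · have h' : ¬ Odd ((r:ℕ) + (n:ℕ)) := by rwa [Nat.add_comm]
      simp only [hA, if_neg h, if_neg h', zero_mul, add_zero]
      exact mul_nonneg (div_nonneg (abs_nonneg _) (hγ n).le)
        (div_nonneg (abs_nonneg _) (hγ r).le)
  have step3 : (∑ r : Fin (N+1), ∑ n : Fin (N+1), A n r)
      = 1/2 * ∑ r : Fin (N+1), ∑ n : Fin (N+1), (A n r + A r n) := by
    simp only [Finset.sum_add_distrib]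
    have hcomm : (∑ r : Fin (N+1), ∑ n : Fin (N+1), A r n)
        = ∑ r : Fin (N+1), ∑ n : Fin (N+1), A n r := Finset.sum_comm
    rw [hcomm]
    ring
  have step4 : (∑ r : Fin (N+1), ∑ n : Fin (N+1), (A n r + A r n))
      ≤ ∑ r : Fin (N+1), ∑ n : Fin (N+1), (|b n|/γ n) * (|b r|/γ r) :=
    Finset.sum_le_sum fun r _ => Finset.sum_le_sum fun n _ => step_pt n r
  have step5 : (∑ r : Fin (N+1), ∑ n : Fin (N+1), (|b n|/γ n) * (|b r|/γ r))
      = (∑ n : Fin (N+1), |b n|/γ n)^2 := by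
    simp_rw [← Finset.sum_mul, ← Finset.mul_sum]
    rw [sq]
  have step6 : (∑ n : Fin (N+1), |b n|/γ n)^2
      ≤ (∑ n : Fin (N+1), (1/γ n)^2) * (∑ n : Fin (N+1), b n ^ 2) := by
    have h := Finset.sum_mul_sq_le_sq_mul_sq Finset.univ (fun n => 1/γ n) (fun n => |b n|)
    simpa only [one_div_mul_eq_div, sq_abs] using h
  rw [step0, step3, mul_assoc]
  exact mul_le_mul_of_nonneg_left
    (le_trans step4 (le_trans (le_of_eq step5) step6)) (by norm_num)

lemma double_CS (M N : ℕ) (f g : Fin M → Fin (N + 1) → ℝ) :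
    ∑ l : Fin M, ∑ r : Fin (N + 1), f l r * g l r
      ≤ Real.sqrt (∑ l : Fin M, ∑ r : Fin (N + 1), f l r ^ 2)
        * Real.sqrt (∑ l : Fin M, ∑ r : Fin (N + 1), g l r ^ 2) := by
  have h := Finset.sum_mul_sq_le_sq_mul_sq (Finset.univ : Finset (Fin M × Fin (N+1)))
    (fun p => f p.1 p.2) (fun p => g p.1 p.2)
  rw [Fintype.sum_prod_type, Fintype.sum_prod_type, Fintype.sum_prod_type] at h
  calc ∑ l : Fin M, ∑ r : Fin (N + 1), f l r * g l r
      ≤ |∑ l : Fin M, ∑ r : Fin (N + 1), f l r * g l r| := le_abs_self _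
    _ = Real.sqrt ((∑ l : Fin M, ∑ r : Fin (N + 1), f l r * g l r)^2) :=
        (Real.sqrt_sq_eq_abs _).symm
    _ ≤ Real.sqrt ((∑ l : Fin M, ∑ r : Fin (N + 1), f l r ^ 2)
          * (∑ l : Fin M, ∑ r : Fin (N + 1), g l r ^ 2)) := Real.sqrt_le_sqrt h
    _ = _ := Real.sqrt_mul (by positivity) _

/-- For every `B`, `𝒫(B)·B ≤ −|B|² + β̂·(2c/π²)·|B|² + |F|·|B|`; in particular, if
`β̂ < π²/(2c)`, then `𝒫(B)·B < 0` whenever `|B| > |F|/(1 − 2cβ̂/π²)`. -/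
theorem Pop_dot_estimate (M N : ℕ) (hM : 1 ≤ M) (hN : 1 ≤ N) (β : ℝ) (hβ0 : 0 ≤ β)
    (F : Fin M → Fin (N + 1) → ℝ) :
    (∀ B : Fin M → Fin (N + 1) → ℝ,
        edot M N (Pop M N β F B) B
          ≤ -(enorm M N B) ^ 2 + β * (2 * cConst / π ^ 2) * (enorm M N B) ^ 2
            + enorm M N F * enorm M N B)
      ∧ (β < π ^ 2 / (2 * cConst) →
          ∀ B : Fin M → Fin (N + 1) → ℝ,
            enorm M N B > enorm M N F / (1 - 2 * cConst * β / π ^ 2) →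
              edot M N (Pop M N β F B) B < 0) := by
  have hπ := Real.pi_pos
  have hπ2 : (0:ℝ) < π^2 := by positivity
  have hc := cConst_ge
  have hc0 : (0:ℝ) < cConst := cConst_pos
  have main : ∀ B : Fin M → Fin (N + 1) → ℝ,
      edot M N (Pop M N β F B) B
        ≤ -(enorm M N B) ^ 2 + β * (2 * cConst / π ^ 2) * (enorm M N B) ^ 2
          + enorm M N F * enorm M N B := by
    intro B
    have hQ : (enorm M N B)^2 = ∑ l : Fin M, ∑ r : Fin (N+1), B l r ^ 2 :=
      Real.sq_sqrt (by positivity)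
    have hQF : (enorm M N F)^2 = ∑ l : Fin M, ∑ r : Fin (N+1), F l r ^ 2 :=
      Real.sq_sqrt (by positivity)
    have expand : edot M N (Pop M N β F B) B
        = -(∑ l : Fin M, ∑ r : Fin (N+1), B l r ^ 2)
          + β * (∑ l : Fin M, ∑ r : Fin (N+1), (∑ n : Fin (N + 1),
              if Odd ((n : ℕ) + (r : ℕ)) then
                B l n * ((n : ℕ) / 2 : ℝ)
                  * (1 / (gammaMN ((l : ℕ) + 1) (n : ℕ) * gammaMN ((l : ℕ) + 1) (r : ℕ)))
                  * (1 / (((n : ℕ) : ℝ) + ((r : ℕ) : ℝ)) + 1 / (((n : ℕ) : ℝ) - ((r : ℕ) : ℝ)))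
              else 0) * B l r)
          - (∑ l : Fin M, ∑ r : Fin (N+1), F l r * B l r) := by
      unfold edot Pop
      rw [Finset.mul_sum]
      rw [← Finset.sum_neg_distrib, ← Finset.sum_add_distrib, ← Finset.sum_sub_distrib]
      refine Finset.sum_congr rfl fun l _ => ?_
      rw [Finset.mul_sum]
      rw [← Finset.sum_neg_distrib, ← Finset.sum_add_distrib, ← Finset.sum_sub_distrib]
      refine Finset.sum_congr rfl fun r _ => ?_
      ring
    have key : ∀ l : Fin M,
        (∑ r : Fin (N+1), (∑ n : Fin (N + 1),
            if Odd ((n : ℕ) + (r : ℕ)) then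
              B l n * ((n : ℕ) / 2 : ℝ)
                * (1 / (gammaMN ((l : ℕ) + 1) (n : ℕ) * gammaMN ((l : ℕ) + 1) (r : ℕ)))
                * (1 / (((n : ℕ) : ℝ) + ((r : ℕ) : ℝ)) + 1 / (((n : ℕ) : ℝ) - ((r : ℕ) : ℝ)))
            else 0) * B l r)
          ≤ (2 * cConst / π ^ 2) * ∑ r : Fin (N+1), B l r ^ 2 := by
      intro l
      have hγ : ∀ n : Fin (N+1), 0 < gammaMN ((l:ℕ)+1) (n:ℕ) :=
        fun n => gammaMN_pos (by omega) _
      have h1 := row_bound_gen N (B l) (fun n => gammaMN ((l:ℕ)+1) (n:ℕ)) hγ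
      have h2 := sum_inv_gammaMN_sq (l := (l:ℕ)+1) (by omega) N
      have hb2 : (0:ℝ) ≤ ∑ r : Fin (N+1), B l r ^ 2 := by positivity
      calc (∑ r : Fin (N+1), (∑ n : Fin (N + 1),
            if Odd ((n : ℕ) + (r : ℕ)) then
              B l n * ((n : ℕ) / 2 : ℝ)
                * (1 / (gammaMN ((l : ℕ) + 1) (n : ℕ) * gammaMN ((l : ℕ) + 1) (r : ℕ)))
                * (1 / (((n : ℕ) : ℝ) + ((r : ℕ) : ℝ)) + 1 / (((n : ℕ) : ℝ) - ((r : ℕ) : ℝ)))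
            else 0) * B l r)
          ≤ 1/2 * (∑ n : Fin (N+1), (1/gammaMN ((l:ℕ)+1) (n:ℕ))^2)
              * (∑ r : Fin (N+1), B l r ^ 2) := h1
        _ ≤ 1/2 * (4*cConst/π^2) * (∑ r : Fin (N+1), B l r ^ 2) := by
            apply mul_le_mul_of_nonneg_right _ hb2
            apply mul_le_mul_of_nonneg_left h2 (by norm_num)
        _ = (2 * cConst / π ^ 2) * ∑ r : Fin (N+1), B l r ^ 2 := by ring
    have hmid : (∑ l : Fin M, ∑ r : Fin (N+1), (∑ n : Fin (N + 1),
          if Odd ((n : ℕ) + (r : ℕ)) then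
            B l n * ((n : ℕ) / 2 : ℝ)
              * (1 / (gammaMN ((l : ℕ) + 1) (n : ℕ) * gammaMN ((l : ℕ) + 1) (r : ℕ)))
              * (1 / (((n : ℕ) : ℝ) + ((r : ℕ) : ℝ)) + 1 / (((n : ℕ) : ℝ) - ((r : ℕ) : ℝ)))
          else 0) * B l r)
        ≤ (2 * cConst / π ^ 2) * ∑ l : Fin M, ∑ r : Fin (N+1), B l r ^ 2 := by
      rw [Finset.mul_sum]
      exact Finset.sum_le_sum fun l _ => key l
    have hF : -(∑ l : Fin M, ∑ r : Fin (N+1), F l r * B l r)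
        ≤ enorm M N F * enorm M N B := by
      calc -(∑ l : Fin M, ∑ r : Fin (N+1), F l r * B l r)
          ≤ Real.sqrt (∑ l : Fin M, ∑ r : Fin (N+1), F l r ^ 2)
            * Real.sqrt (∑ l : Fin M, ∑ r : Fin (N+1), B l r ^ 2) := by
            have h2 : ∑ l : Fin M, ∑ r : Fin (N+1), (-F l r)^2
                = ∑ l : Fin M, ∑ r : Fin (N+1), F l r ^ 2 := by
              refine Finset.sum_congr rfl fun l _ => Finset.sum_congr rfl fun r _ => ?_
              ring
            have h3 : ∑ l : Fin M, ∑ r : Fin (N+1), (-F l r) * B l r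
                = -(∑ l : Fin M, ∑ r : Fin (N+1), F l r * B l r) := by
              rw [← Finset.sum_neg_distrib]
              refine Finset.sum_congr rfl fun l _ => ?_
              rw [← Finset.sum_neg_distrib]
              exact Finset.sum_congr rfl fun r _ => by ring
            have h0 := double_CS M N (fun l r => -F l r) B
            rw [h3, h2] at h0
            exact h0
        _ = enorm M N F * enorm M N B := rfl
    rw [expand, hQ]
    have hβmid := mul_le_mul_of_nonneg_left hmid hβ0
    linarith
  refine ⟨main, ?_⟩
  intro hβ B hB
  have h1t : 0 < 1 - 2 * cConst * β / π ^ 2 := by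
    rw [sub_pos, div_lt_one hπ2]
    have := (lt_div_iff₀ (by positivity)).1 hβ
    nlinarith
  have hF0 : 0 ≤ enorm M N F := Real.sqrt_nonneg _
  have hB0 : 0 < enorm M N B := lt_of_le_of_lt (div_nonneg hF0 h1t.le) hB
  have h2 : enorm M N F < (1 - 2 * cConst * β / π ^ 2) * enorm M N B := by
    have := (div_lt_iff₀ h1t).1 hB
    linarith
  have hm := main B
  have hss : 2 * cConst * β / π ^ 2 = β * (2 * cConst / π ^ 2) := by ring
  rw [hss] at h2
  set x := enorm M N B with hx
  set y := enorm M N F with hy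
  set s := β * (2 * cConst / π ^ 2) with hsdef
  have h3 := mul_lt_mul_of_pos_right h2 hB0
  nlinarith [h3, hm]
end

section
/- Let c = (1/8)·(2π·coth(2π) + 1) and let M, N ≥ 1 be integers. For every B = (B_{mn})_{1≤m≤M, 0≤n≤N} ∈ ℝ^{M×(N+1)} one has (1/2)·∑_{m=1}^{M} ∑_{0≤n,r≤N, n+r odd} (B_{mn}·B_{mr}/(γ_{mn}·γ_{mr}))·(n/(n+r) + n/(n−r)) ≤ (2c/π²)·∑_{m=1}^{M}∑_{n=0}^{N} B_{mn}². -/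
open Real

lemma tail_aux : ∀ K : ℕ, ∑ i ∈ Finset.range (K+4), (1:ℝ)/(4+((i:ℝ)+1)^2)
    ≤ 73/104 - 1/((K:ℝ)+4) := by
  intro K
  induction K with
  | zero =>
    rw [show 0+4 = 4 from rfl, Finset.sum_range_succ, Finset.sum_range_succ,
      Finset.sum_range_succ, Finset.sum_range_succ, Finset.sum_range_zero]
    norm_num
  | succ k ih =>
    rw [show k+1+4 = (k+4)+1 from by ring, Finset.sum_range_succ]
    have hk : (0:ℝ) ≤ (k:ℝ) := Nat.cast_nonneg k
    have h1 : (1:ℝ)/(4+((↑(k+4):ℝ)+1)^2) ≤ 1/((k:ℝ)+4) - 1/((k:ℝ)+1+4) := by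
      have hne1 : ((k:ℝ)+4) ≠ 0 := by positivity
      have hne2 : ((k:ℝ)+5) ≠ 0 := by positivity
      have he : (1:ℝ)/((k:ℝ)+4) - 1/((k:ℝ)+1+4) = 1/(((k:ℝ)+4)*((k:ℝ)+5)) := by
        rw [show (k:ℝ)+1+4 = (k:ℝ)+5 from by ring]
        field_simp; norm_num
      rw [he]
      apply one_div_le_one_div_of_le (by positivity)
      push_cast; nlinarith
    push_cast at h1 ⊢
    linarith

lemma tail_sum_le (N : ℕ) : ∑ i ∈ Finset.range N, (1:ℝ)/(4+((i:ℝ)+1)^2) ≤ π/4 := by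
  have h1 : ∑ i ∈ Finset.range N, (1:ℝ)/(4+((i:ℝ)+1)^2)
      ≤ ∑ i ∈ Finset.range (N+4), (1:ℝ)/(4+((i:ℝ)+1)^2) := by
    apply Finset.sum_le_sum_of_subset_of_nonneg
    · exact Finset.range_subset_range.mpr (by omega)
    · intro i _ _; positivity
  have h2 := tail_aux N
  have h3 : (0:ℝ) < (N:ℝ)+4 := by positivity
  have hπ : (3:ℝ) < π := Real.pi_gt_three
  have : (73:ℝ)/104 ≤ π/4 := by nlinarith
  have h4 : (0:ℝ) ≤ 1/((N:ℝ)+4) := by positivity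
  linarith

lemma ab_pos (m n : ℕ) (hm : 1 ≤ m) : 0 < alphaMN m n * bCoef n := by
  have hm' : (1:ℝ) ≤ (m:ℝ) := by exact_mod_cast hm
  have hm2 : (1:ℝ) ≤ (m:ℝ)^2 := by nlinarith
  have hp2 : (0:ℝ) < π^2 := by positivity
  have h1 : 0 < alphaMN m n := by
    unfold alphaMN
    nlinarith [sq_nonneg ((n:ℝ)), mul_le_mul_of_nonneg_left hm2 hp2.le]
  have h2 : 0 < bCoef n := by unfold bCoef; split <;> norm_num
  positivity

lemma gamma_pos (m n : ℕ) (hm : 1 ≤ m) : 0 < gammaMN m n :=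
  Real.sqrt_pos.mpr (ab_pos m n hm)

lemma inv_gamma_sq (m n : ℕ) (hm : 1 ≤ m) :
    (1 / gammaMN m n) ^ 2 = 1 / (alphaMN m n * bCoef n) := by
  rw [div_pow, one_pow, gammaMN, Real.sq_sqrt (ab_pos m n hm).le]

lemma gamma_sum_bound (N m : ℕ) (hm : 1 ≤ m) :
    ∑ n : Fin (N+1), (1 / gammaMN m (n:ℕ)) ^ 2 ≤ 1/(2*π^2) + 1/π := by
  have hπ := Real.pi_pos
  have hm' : (1:ℝ) ≤ (m:ℝ) := by exact_mod_cast hm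
  have hm2 : (1:ℝ) ≤ (m:ℝ)^2 := by nlinarith
  have hp2 : (0:ℝ) < π^2 := by positivity
  have hkey : π^2 ≤ π^2 * (m:ℝ)^2 := by nlinarith
  rw [Fin.sum_univ_eq_sum_range (fun n => (1 / gammaMN m n) ^ 2) (N+1),
    Finset.sum_range_succ']
  have h0 : (1 / gammaMN m 0) ^ 2 ≤ 1/(2*π^2) := by
    rw [inv_gamma_sq m 0 hm]
    apply one_div_le_one_div_of_le (by positivity)
    unfold alphaMN bCoef
    simp only [if_pos rfl]
    push_cast
    nlinarith [hkey]
  have h1 : ∑ i ∈ Finset.range N, (1 / gammaMN m (i+1)) ^ 2 ≤ 1/π := by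
    have hstep : ∀ i : ℕ, (1 / gammaMN m (i+1)) ^ 2 ≤ 4/π^2 * (1/(4+((i:ℝ)+1)^2)) := by
      intro i
      rw [inv_gamma_sq m (i+1) hm]
      have hx : (0:ℝ) < 4+((i:ℝ)+1)^2 := by positivity
      have heq : (4:ℝ)/π^2 * (1/(4+((i:ℝ)+1)^2)) = 1/(π^2/4*(4+((i:ℝ)+1)^2)) := by
        field_simp
      rw [heq]
      apply one_div_le_one_div_of_le (by positivity)
      unfold alphaMN bCoef
      simp only [Nat.succ_ne_zero, if_false]
      push_cast
      nlinarith [hkey, sq_nonneg ((i:ℝ)+1)]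
    calc ∑ i ∈ Finset.range N, (1 / gammaMN m (i+1)) ^ 2
        ≤ ∑ i ∈ Finset.range N, 4/π^2 * (1/(4+((i:ℝ)+1)^2)) :=
          Finset.sum_le_sum fun i _ => hstep i
      _ = 4/π^2 * ∑ i ∈ Finset.range N, (1:ℝ)/(4+((i:ℝ)+1)^2) := by
          rw [Finset.mul_sum]
      _ ≤ 4/π^2 * (π/4) := by
          apply mul_le_mul_of_nonneg_left (tail_sum_le N) (by positivity)
      _ = 1/π := by field_simp
  linarith

lemma key_m (N m0 : ℕ) (hm0 : 1 ≤ m0) (b : Fin (N+1) → ℝ) :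
    (∑ n : Fin (N + 1), ∑ r : Fin (N + 1),
        if Odd ((n : ℕ) + (r : ℕ)) then
          (b n * b r / (gammaMN m0 (n : ℕ) * gammaMN m0 (r : ℕ)))
            * (((n : ℕ) : ℝ) / (((n : ℕ) : ℝ) + ((r : ℕ) : ℝ))
                + ((n : ℕ) : ℝ) / (((n : ℕ) : ℝ) - ((r : ℕ) : ℝ)))
        else 0)
      ≤ (1/(2*π^2) + 1/π) * ∑ n : Fin (N+1), (b n)^2 := by
  set F : Fin (N+1) → Fin (N+1) → ℝ := fun n r =>
    if Odd ((n : ℕ) + (r : ℕ)) then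
      (b n * b r / (gammaMN m0 (n : ℕ) * gammaMN m0 (r : ℕ)))
        * (((n : ℕ) : ℝ) / (((n : ℕ) : ℝ) + ((r : ℕ) : ℝ))
            + ((n : ℕ) : ℝ) / (((n : ℕ) : ℝ) - ((r : ℕ) : ℝ)))
    else 0 with hF
  set a : Fin (N+1) → ℝ := fun n => b n / gammaMN m0 (n:ℕ) with ha
  have hγ : ∀ n : ℕ, 0 < gammaMN m0 n := fun n => gamma_pos m0 n hm0
  -- symmetrization
  have hsym : ∀ n r : Fin (N+1), F n r + F r n
      = if Odd ((n : ℕ) + (r : ℕ)) then 2 * (a n * a r) else 0 := by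
    intro n r
    simp only [hF, ha]
    by_cases h : Odd ((n : ℕ) + (r : ℕ))
    · have h' : Odd ((r : ℕ) + (n : ℕ)) := by rwa [Nat.add_comm]
      rw [if_pos h, if_pos h', if_pos h]
      have hne : (n : ℕ) ≠ (r : ℕ) := by rw [Nat.odd_iff] at h; omega
      have hs : (n : ℕ) + (r : ℕ) ≠ 0 := by rw [Nat.odd_iff] at h; omega
      have hxy : ((n:ℕ):ℝ) ≠ ((r:ℕ):ℝ) := by exact_mod_cast hne
      have h1 : ((n:ℕ):ℝ) + ((r:ℕ):ℝ) ≠ 0 := by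
        have : (((n:ℕ) + (r:ℕ) : ℕ):ℝ) ≠ 0 := Nat.cast_ne_zero.mpr hs
        push_cast at this; exact this
      have h2 : ((n:ℕ):ℝ) - ((r:ℕ):ℝ) ≠ 0 := sub_ne_zero.mpr hxy
      have h3 : ((r:ℕ):ℝ) + ((n:ℕ):ℝ) ≠ 0 := by rwa [add_comm]
      have h4 : ((r:ℕ):ℝ) - ((n:ℕ):ℝ) ≠ 0 := by
        rw [show ((r:ℕ):ℝ) - ((n:ℕ):ℝ) = -(((n:ℕ):ℝ) - ((r:ℕ):ℝ)) from by ring]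
        exact neg_ne_zero.mpr h2
      have hg1 : gammaMN m0 (n:ℕ) ≠ 0 := (hγ _).ne'
      have hg2 : gammaMN m0 (r:ℕ) ≠ 0 := (hγ _).ne'
      field_simp
      ring
    · have h' : ¬ Odd ((r : ℕ) + (n : ℕ)) := by rwa [Nat.add_comm]
      rw [if_neg h, if_neg h', if_neg h, add_zero]
  have hT : ∑ n : Fin (N+1), ∑ r : Fin (N+1), F n r
      = ∑ n : Fin (N+1), ∑ r : Fin (N+1),
          (if Odd ((n : ℕ) + (r : ℕ)) then a n * a r else 0) := by
    have e1 : ∑ n : Fin (N+1), ∑ r : Fin (N+1), F n r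
        = ∑ n : Fin (N+1), ∑ r : Fin (N+1), F r n := Finset.sum_comm
    have e2 : (2:ℝ) * (∑ n : Fin (N+1), ∑ r : Fin (N+1), F n r)
        = 2 * (∑ n : Fin (N+1), ∑ r : Fin (N+1),
            (if Odd ((n : ℕ) + (r : ℕ)) then a n * a r else 0)) := by
      calc (2:ℝ) * (∑ n : Fin (N+1), ∑ r : Fin (N+1), F n r)
          = (∑ n : Fin (N+1), ∑ r : Fin (N+1), F n r)
            + (∑ n : Fin (N+1), ∑ r : Fin (N+1), F r n) := by rw [← e1]; ring
        _ = ∑ n : Fin (N+1), ∑ r : Fin (N+1), (F n r + F r n) := by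
            simp only [← Finset.sum_add_distrib]
        _ = ∑ n : Fin (N+1), ∑ r : Fin (N+1),
              (if Odd ((n : ℕ) + (r : ℕ)) then 2 * (a n * a r) else 0) :=
            Finset.sum_congr rfl fun n _ => Finset.sum_congr rfl fun r _ => hsym n r
        _ = 2 * (∑ n : Fin (N+1), ∑ r : Fin (N+1),
              (if Odd ((n : ℕ) + (r : ℕ)) then a n * a r else 0)) := by
            simp only [Finset.mul_sum, mul_ite, mul_zero]
    linarith
  rw [hT]
  -- bound by product of absolute values, then Cauchy-Schwarz
  have hCS : ∑ n : Fin (N+1), ∑ r : Fin (N+1),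
        (if Odd ((n : ℕ) + (r : ℕ)) then a n * a r else 0)
      ≤ (∑ n : Fin (N+1), (1 / gammaMN m0 (n:ℕ))^2) * ∑ n : Fin (N+1), (b n)^2 := by
    calc ∑ n : Fin (N+1), ∑ r : Fin (N+1),
          (if Odd ((n : ℕ) + (r : ℕ)) then a n * a r else 0)
        ≤ ∑ n : Fin (N+1), ∑ r : Fin (N+1), |a n| * |a r| := by
          apply Finset.sum_le_sum; intro n _
          apply Finset.sum_le_sum; intro r _
          split
          · rw [← abs_mul]; exact le_abs_self _
          · positivity
      _ = (∑ n : Fin (N+1), |a n|) ^ 2 := by rw [sq, Finset.sum_mul_sum]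
      _ = (∑ n : Fin (N+1), (1 / gammaMN m0 (n:ℕ)) * |b n|) ^ 2 := by
          congr 1; apply Finset.sum_congr rfl; intro n _
          rw [ha]; simp only
          rw [abs_div, abs_of_pos (hγ (n:ℕ))]; ring
      _ ≤ (∑ n : Fin (N+1), (1 / gammaMN m0 (n:ℕ))^2) * ∑ n : Fin (N+1), |b n|^2 :=
          Finset.sum_mul_sq_le_sq_mul_sq _ _ _
      _ = (∑ n : Fin (N+1), (1 / gammaMN m0 (n:ℕ))^2) * ∑ n : Fin (N+1), (b n)^2 := by
          simp [sq_abs]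
  have hQ : (0:ℝ) ≤ ∑ n : Fin (N+1), (b n)^2 := by positivity
  calc ∑ n : Fin (N+1), ∑ r : Fin (N+1),
        (if Odd ((n : ℕ) + (r : ℕ)) then a n * a r else 0)
      ≤ (∑ n : Fin (N+1), (1 / gammaMN m0 (n:ℕ))^2) * ∑ n : Fin (N+1), (b n)^2 := hCS
    _ ≤ (1/(2*π^2) + 1/π) * ∑ n : Fin (N+1), (b n)^2 :=
        mul_le_mul_of_nonneg_right (gamma_sum_bound N m0 hm0) hQ



/-- For every `B = (B_{mn})_{1≤m≤M, 0≤n≤N}` (with `m : Fin M` standing for `m+1`):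
`(1/2)·∑_m ∑_{n+r odd} (B_{mn}B_{mr}/(γ_{mn}γ_{mr}))·(n/(n+r) + n/(n−r))
  ≤ (2c/π²)·∑_m ∑_n B_{mn}²`. -/
theorem sum_estimate (M N : ℕ) (hM : 1 ≤ M) (hN : 1 ≤ N)
    (B : Fin M → Fin (N + 1) → ℝ) :
    (1/2) * (∑ m : Fin M, ∑ n : Fin (N + 1), ∑ r : Fin (N + 1),
        if Odd ((n : ℕ) + (r : ℕ)) then
          (B m n * B m r / (gammaMN ((m : ℕ) + 1) (n : ℕ) * gammaMN ((m : ℕ) + 1) (r : ℕ)))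
            * (((n : ℕ) : ℝ) / (((n : ℕ) : ℝ) + ((r : ℕ) : ℝ))
                + ((n : ℕ) : ℝ) / (((n : ℕ) : ℝ) - ((r : ℕ) : ℝ)))
        else 0)
      ≤ (2 * cConst / π ^ 2) * ∑ m : Fin M, ∑ n : Fin (N + 1), (B m n) ^ 2 := by
  have hπ := Real.pi_pos
  have hQ : (0:ℝ) ≤ ∑ m : Fin M, ∑ n : Fin (N + 1), (B m n) ^ 2 := by positivity
  have hcoth : (1:ℝ) ≤ cothR (2 * π) := by
    unfold cothR
    have hs : 0 < Real.sinh (2 * π) := Real.sinh_pos_iff.mpr (by positivity)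
    rw [le_div_iff₀ hs, one_mul]
    exact (Real.sinh_lt_cosh _).le
  have hcoef : (1/(4*π^2) + 1/(2*π)) ≤ 2 * cConst / π ^ 2 := by
    have he : 2 * cConst / π ^ 2 = (2 * π * cothR (2 * π) + 1) / (4 * π ^ 2) := by
      unfold cConst; field_simp; ring
    have he2 : (1:ℝ)/(4*π^2) + 1/(2*π) = (2 * π + 1) / (4 * π ^ 2) := by
      field_simp; ring
    rw [he, he2]
    apply div_le_div_of_nonneg_right ?_ (by positivity)
    · nlinarith
  calc (1/2) * (∑ m : Fin M, ∑ n : Fin (N + 1), ∑ r : Fin (N + 1),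
        if Odd ((n : ℕ) + (r : ℕ)) then
          (B m n * B m r / (gammaMN ((m : ℕ) + 1) (n : ℕ) * gammaMN ((m : ℕ) + 1) (r : ℕ)))
            * (((n : ℕ) : ℝ) / (((n : ℕ) : ℝ) + ((r : ℕ) : ℝ))
                + ((n : ℕ) : ℝ) / (((n : ℕ) : ℝ) - ((r : ℕ) : ℝ)))
        else 0)
      ≤ (1/2) * (∑ m : Fin M, (1/(2*π^2) + 1/π) * ∑ n : Fin (N+1), (B m n)^2) := by
        apply mul_le_mul_of_nonneg_left ?_ (by norm_num)
        exact Finset.sum_le_sum fun m _ => key_m N ((m:ℕ)+1) (by omega) (B m)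
    _ = (1/(4*π^2) + 1/(2*π)) * ∑ m : Fin M, ∑ n : Fin (N + 1), (B m n) ^ 2 := by
        rw [← Finset.mul_sum]; ring
    _ ≤ (2 * cConst / π ^ 2) * ∑ m : Fin M, ∑ n : Fin (N + 1), (B m n) ^ 2 :=
        mul_le_mul_of_nonneg_right hcoef hQ
end
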